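/- arXiv:0906.4860 — 2 statements merged into one kernel-verified Lean document; each statement's English description precedes it below -/
import Mathlib

section
/- For a real diagonal m×m matrix R, the matrix Δ(cosh R, sinh R) is a Bogoliubov matrix, and equals the matrix exponential exp(Δ(0,R)). -/
open Matrix

noncomputable section

/-- Doubled-up matrix `Δ(E₋,E₊)`. -/
def dbl {R K : Type*} (Em Ep : Matrix R K ℂ) : Matrix (R ⊕ R) (K ⊕ K) ℂ :=
  Matrix.fromBlocks Em Ep (Ep.map (starRingEnd ℂ)) (Em.map (starRingEnd ℂ))

/-- The matrix `J = diag(I, -I)`. -/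
def Jm (N : Type*) [DecidableEq N] : Matrix (N ⊕ N) (N ⊕ N) ℂ :=
  Matrix.fromBlocks 1 0 0 (-1)

/-- The `♭` involution `X^♭ = J Xᴴ J`. -/
def flatB {N M : Type*} [Fintype N] [DecidableEq N] [Fintype M] [DecidableEq M]
    (X : Matrix (N ⊕ N) (M ⊕ M) ℂ) : Matrix (M ⊕ M) (N ⊕ N) ℂ :=
  Jm M * Xᴴ * Jm N

/-- Bogoliubov matrix: doubled-up and `♭`-unitary. -/
def IsBog {N : Type*} [Fintype N] [DecidableEq N]
    (S : Matrix (N ⊕ N) (N ⊕ N) ℂ) : Prop :=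
  (∃ Sm Sp, S = dbl Sm Sp) ∧ flatB S * S = 1 ∧ S * flatB S = 1

/-!
Since the blocks are real and diagonal, `♭`-unitarity of `Δ(cosh R, sinh R)` reduces entrywise
to `cosh² − sinh² = 1`. For the exponential, conjugation by `H = [[1, 1], [1, −1]]`
(`H⁻¹ = H / 2`) diagonalises `Δ(0, R) = [[0, R], [R, 0]]` to `diag(R, −R)`, and conjugating
`diag(e^R, e^{−R})` back gives `[[cosh R, sinh R], [sinh R, cosh R]]`.
-/

lemma dbl_eq_fromBlocks_of_map_conj {R K : Type*} {A B : Matrix R K ℂ}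
    (hA : A.map (starRingEnd ℂ) = A) (hB : B.map (starRingEnd ℂ) = B) :
    dbl A B = fromBlocks A B B A := by
  rw [dbl, hA, hB]

lemma flatB_fromBlocks {N M : Type*} [Fintype N] [DecidableEq N] [Fintype M] [DecidableEq M]
    (A B C D : Matrix N M ℂ) :
    flatB (fromBlocks A B C D) = fromBlocks Aᴴ (-Cᴴ) (-Bᴴ) Dᴴ := by
  simp [flatB, Jm, fromBlocks_conjTranspose, fromBlocks_multiply]

section RealDiagonal

variable {n : Type*} [DecidableEq n]

lemma map_starRingEnd_diagonal_ofReal (v : n → ℝ) :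
    (diagonal fun i => (v i : ℂ)).map (starRingEnd ℂ) = diagonal fun i => (v i : ℂ) := by
  simp [diagonal_map]

lemma conjTranspose_diagonal_ofReal (v : n → ℝ) :
    (diagonal fun i => (v i : ℂ))ᴴ = diagonal fun i => (v i : ℂ) := by
  simp [diagonal_conjTranspose]

lemma isBog_dbl_diagonal_ofReal [Fintype n] (c s : n → ℝ) (h : ∀ i, c i ^ 2 - s i ^ 2 = 1) :
    IsBog (dbl (diagonal fun i => (c i : ℂ)) (diagonal fun i => (s i : ℂ))) := by
  have hcs : ∀ i, (c i : ℂ) ^ 2 - (s i : ℂ) ^ 2 = 1 := fun i => mod_cast h i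
  refine ⟨⟨_, _, rfl⟩, ?_, ?_⟩ <;>
  · rw [dbl_eq_fromBlocks_of_map_conj (map_starRingEnd_diagonal_ofReal c)
      (map_starRingEnd_diagonal_ofReal s), flatB_fromBlocks, fromBlocks_multiply, ← fromBlocks_one]
    simp only [conjTranspose_diagonal_ofReal, diagonal_neg, diagonal_mul_diagonal,
      diagonal_add, ← diagonal_zero, ← diagonal_one]
    congr 2 <;> funext i <;> first | ring1 | linear_combination hcs i

end RealDiagonal

section BlockHadamard

variable (n α : Type*) [Fintype n] [DecidableEq n]

def blockHadamard [Ring α] : Matrix (n ⊕ n) (n ⊕ n) α :=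
  fromBlocks 1 1 1 (-1)

variable {n α}

lemma blockHadamard_mul_self [Ring α] :
    blockHadamard n α * blockHadamard n α = (2 : α) • 1 := by
  rw [blockHadamard, fromBlocks_multiply, ← fromBlocks_one, fromBlocks_smul]
  congr 1 <;> simp [two_smul]

lemma blockHadamard_mul_fromBlocks_mul_blockHadamard [Ring α] (A B : Matrix n n α) :
    blockHadamard n α * fromBlocks A 0 0 B * blockHadamard n α =
      fromBlocks (A + B) (A - B) (A - B) (A + B) := by
  simp [blockHadamard, fromBlocks_multiply, sub_eq_add_neg]

variable [Field α] [NeZero (2 : α)]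

lemma blockHadamard_mul_inv_two_smul_blockHadamard :
    blockHadamard n α * ((2 : α)⁻¹ • blockHadamard n α) = 1 := by
  rw [mul_smul_comm, blockHadamard_mul_self, smul_smul, inv_mul_cancel₀ two_ne_zero, one_smul]

lemma inv_blockHadamard : (blockHadamard n α)⁻¹ = (2 : α)⁻¹ • blockHadamard n α :=
  inv_eq_right_inv blockHadamard_mul_inv_two_smul_blockHadamard

lemma isUnit_blockHadamard : IsUnit (blockHadamard n α) :=
  .of_mul_eq_one _ blockHadamard_mul_inv_two_smul_blockHadamard

end BlockHadamard

open NormedSpace in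
theorem exp_fromBlocks_zero_diagonal {n : Type*} [Fintype n] [DecidableEq n] (v : n → ℂ) :
    exp (fromBlocks 0 (diagonal v) (diagonal v) 0) =
      fromBlocks (diagonal fun i => Complex.cosh (v i)) (diagonal fun i => Complex.sinh (v i))
        (diagonal fun i => Complex.sinh (v i)) (diagonal fun i => Complex.cosh (v i)) := by
  have hdiag : fromBlocks 0 (diagonal v) (diagonal v) 0 =
      blockHadamard n ℂ * diagonal (Sum.elim v (-v)) * (blockHadamard n ℂ)⁻¹ := by
    rw [inv_blockHadamard, mul_smul_comm, ← fromBlocks_diagonal,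
      blockHadamard_mul_fromBlocks_mul_blockHadamard, fromBlocks_smul]
    simp only [diagonal_add, diagonal_sub, ← diagonal_smul, ← diagonal_zero]
    congr 1 <;> congr 1 <;> ext i <;> simp only [Pi.smul_apply, Pi.neg_apply] <;> ring
  have hexp : exp (Sum.elim v (-v)) =
      Sum.elim (fun i => Complex.exp (v i)) (fun i => Complex.exp (-v i)) := by
    ext (i | i) <;> simp [Complex.exp_eq_exp_ℂ]
  rw [hdiag, Matrix.exp_conj (blockHadamard n ℂ) _ isUnit_blockHadamard, exp_diagonal, hexp,
    ← fromBlocks_diagonal, inv_blockHadamard, mul_smul_comm,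
    blockHadamard_mul_fromBlocks_mul_blockHadamard, fromBlocks_smul]
  simp only [diagonal_add, diagonal_sub, ← diagonal_smul]
  congr 1 <;> congr 1 <;> ext i <;> simp only [Pi.smul_apply, smul_eq_mul]
  · linear_combination (-2⁻¹ : ℂ) * Complex.two_cosh (v i)
  · linear_combination (-2⁻¹ : ℂ) * Complex.two_sinh (v i)
  · linear_combination (-2⁻¹ : ℂ) * Complex.two_sinh (v i)
  · linear_combination (-2⁻¹ : ℂ) * Complex.two_cosh (v i)

theorem bog_of_diag_cosh_sinh {m : Type*} [Fintype m] [DecidableEq m] (d : m → ℝ) :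
    IsBog (dbl (Matrix.diagonal fun i => (Real.cosh (d i) : ℂ))
              (Matrix.diagonal fun i => (Real.sinh (d i) : ℂ))) ∧
    dbl (Matrix.diagonal fun i => (Real.cosh (d i) : ℂ))
        (Matrix.diagonal fun i => (Real.sinh (d i) : ℂ)) =
      NormedSpace.exp (dbl (0 : Matrix m m ℂ) (Matrix.diagonal fun i => (d i : ℂ))) := by
  refine ⟨isBog_dbl_diagonal_ofReal _ _ fun i => Real.cosh_sq_sub_sinh_sq (d i), ?_⟩
  rw [dbl_eq_fromBlocks_of_map_conj (map_starRingEnd_diagonal_ofReal _)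
      (map_starRingEnd_diagonal_ofReal _),
    dbl_eq_fromBlocks_of_map_conj (Matrix.map_zero _ (map_zero _))
      (map_starRingEnd_diagonal_ofReal _),
    exp_fromBlocks_zero_diagonal]
  simp only [Complex.ofReal_cosh, Complex.ofReal_sinh]
end
end

section
/- (Siegel-type identity for ♭) With Ŝ_{jk} as above and X, Y square matrices of size 2n₂ such that I − Ŝ₂₂X and I − Ŝ₂₂Y are invertible, the Möbius map Ψ(X) = Ŝ₁₁ + Ŝ₁₂ X (I − Ŝ₂₂ X)^{-1} Ŝ₂₁ satisfies Ψ(X)^♭ Ψ(Y) = I − Ŝ₂₁^♭ (I − X^♭ Ŝ₂₂^♭)^{-1} (I − X^♭ Y)(I − Ŝ₂₂ Y)^{-1} Ŝ₂₁. -/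
/-!
With `a, b, c, d = Ŝ₁₁, Ŝ₁₂, Ŝ₂₁, Ŝ₂₂`, put `W = (1 - d Y)⁻¹ c`, so that `W = c + d Y W` and
`Ψ(Y) = a + b Y W`. The block relations of `Ŝ^♭ Ŝ = 1` give
`a^♭ Ψ(Y) = 1 - c^♭ W` and `b^♭ Ψ(Y) = (Y - d^♭) W`. Since `♭` is an anti-automorphism,
`Ψ(X)^♭ = a^♭ + c^♭ (1 - X^♭ d^♭)⁻¹ X^♭ b^♭`, and multiplying out leaves
`1 - c^♭ (1 - X^♭ d^♭)⁻¹ ((1 - X^♭ d^♭) - X^♭ (Y - d^♭)) W`, which is the claim.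
-/

open Matrix

noncomputable section

section Flat

variable {N M P : Type*} [Fintype N] [DecidableEq N] [Fintype M] [DecidableEq M]
  [Fintype P] [DecidableEq P]

theorem Jm_mul_Jm : Jm N * Jm N = 1 := by
  simp [Jm, fromBlocks_multiply, ← fromBlocks_one]

theorem inv_Jm : (Jm N)⁻¹ = Jm N :=
  inv_eq_left_inv Jm_mul_Jm

theorem flatB_mul (A : Matrix (N ⊕ N) (M ⊕ M) ℂ) (B : Matrix (M ⊕ M) (P ⊕ P) ℂ) :
    flatB (A * B) = flatB B * flatB A := by
  calc flatB (A * B) = Jm P * Bᴴ * (Jm M * Jm M) * Aᴴ * Jm N := by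
        rw [flatB, conjTranspose_mul, Jm_mul_Jm, Matrix.mul_one, Matrix.mul_assoc _ Bᴴ]
    _ = flatB B * flatB A := by simp only [flatB, Matrix.mul_assoc]

theorem flatB_add (A B : Matrix (N ⊕ N) (M ⊕ M) ℂ) :
    flatB (A + B) = flatB A + flatB B := by
  rw [flatB, conjTranspose_add, Matrix.mul_add, Matrix.add_mul]; rfl

theorem flatB_sub (A B : Matrix (N ⊕ N) (M ⊕ M) ℂ) :
    flatB (A - B) = flatB A - flatB B := by
  rw [flatB, conjTranspose_sub, Matrix.mul_sub, Matrix.sub_mul]; rfl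

theorem flatB_one : flatB (1 : Matrix (N ⊕ N) (N ⊕ N) ℂ) = 1 := by
  rw [flatB, conjTranspose_one, Matrix.mul_one, Jm_mul_Jm]

theorem flatB_inv (A : Matrix (N ⊕ N) (N ⊕ N) ℂ) : flatB A⁻¹ = (flatB A)⁻¹ := by
  rw [flatB, flatB, conjTranspose_nonsing_inv, Matrix.mul_inv_rev, Matrix.mul_inv_rev, inv_Jm,
    Matrix.mul_assoc]

theorem IsUnit.flatB {A : Matrix (N ⊕ N) (N ⊕ N) ℂ} (h : IsUnit A) : IsUnit (flatB A) := by
  have hJ : IsUnit (Jm N) := (isUnit_iff_isUnit_det _).mpr (isUnit_det_of_right_inverse Jm_mul_Jm)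
  exact (hJ.mul ((isUnit_conjTranspose A).mpr h)).mul hJ

end Flat

section Mobius

variable {R : Type*} [CommRing R] {k m n : Type*} [DecidableEq k] [Fintype m] [Fintype n]
  [DecidableEq n]

/-- `h1`–`h4` say that `[a' c'; b' d']` is a left inverse of `[a b; c d]`. -/
theorem mul_mobius_of_leftInverse
    {a : Matrix m k R} {b : Matrix m n R} {c : Matrix n k R} {d : Matrix n n R}
    {a' : Matrix k m R} {b' : Matrix n m R} {c' : Matrix k n R} {d' : Matrix n n R}
    (h1 : a' * a + c' * c = 1) (h2 : a' * b + c' * d = 0)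
    (h3 : b' * a + d' * c = 0) (h4 : b' * b + d' * d = 1)
    {x' Y : Matrix n n R} (hU : IsUnit (1 - x' * d')) (hV : IsUnit (1 - d * Y)) :
    (a' + c' * (1 - x' * d')⁻¹ * x' * b') * (a + b * Y * (1 - d * Y)⁻¹ * c) =
      1 - c' * (1 - x' * d')⁻¹ * (1 - x' * Y) * (1 - d * Y)⁻¹ * c := by
  set U := 1 - x' * d'
  set W := (1 - d * Y)⁻¹ * c
  have hW : c + d * Y * W = W := by
    have hVW : (1 - d * Y) * W = c :=
      (1 - d * Y).mul_nonsing_inv_cancel_left c ((isUnit_iff_isUnit_det _).mp hV)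
    rw [← hVW, Matrix.sub_mul, Matrix.one_mul, Matrix.mul_assoc]; abel
  have haΨ : a' * (a + b * Y * W) = 1 - c' * W := calc
    _ = a' * a + a' * b * (Y * W) := by simp only [Matrix.mul_add, Matrix.mul_assoc]
    _ = 1 - c' * (c + d * Y * W) := by
      rw [eq_sub_of_add_eq h1, eq_neg_of_add_eq_zero_left h2]
      simp only [Matrix.mul_add, Matrix.neg_mul, Matrix.mul_assoc]; abel
    _ = 1 - c' * W := by rw [hW]
  have hbΨ : b' * (a + b * Y * W) = (Y - d') * W := calc
    _ = b' * a + b' * b * (Y * W) := by simp only [Matrix.mul_add, Matrix.mul_assoc]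
    _ = Y * W - d' * (c + d * Y * W) := by
      rw [eq_sub_of_add_eq h4, eq_neg_of_add_eq_zero_left h3]
      simp only [Matrix.mul_add, Matrix.sub_mul, Matrix.one_mul, Matrix.mul_assoc]; abel
    _ = (Y - d') * W := by rw [hW, Matrix.sub_mul]
  have hUU : U⁻¹ * U = 1 := nonsing_inv_mul _ ((isUnit_iff_isUnit_det _).mp hU)
  rw [show b * Y * (1 - d * Y)⁻¹ * c = b * Y * W by simp only [W, Matrix.mul_assoc]]
  calc (a' + c' * U⁻¹ * x' * b') * (a + b * Y * W)
      = a' * (a + b * Y * W) + c' * U⁻¹ * x' * (b' * (a + b * Y * W)) := by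
        simp only [Matrix.add_mul, Matrix.mul_assoc]
    _ = 1 - c' * U⁻¹ * (U - x' * (Y - d')) * W := by
        rw [haΨ, hbΨ, Matrix.mul_sub (c' * U⁻¹) U, Matrix.mul_assoc c' U⁻¹ U, hUU,
          Matrix.mul_one]
        simp only [Matrix.sub_mul, Matrix.mul_sub, Matrix.mul_assoc]; abel
    _ = 1 - c' * U⁻¹ * (1 - x' * Y) * W := by
        rw [show U - x' * (Y - d') = 1 - x' * Y by simp only [U, Matrix.mul_sub]; abel]
    _ = 1 - c' * U⁻¹ * (1 - x' * Y) * (1 - d * Y)⁻¹ * c := by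
        simp only [W, Matrix.mul_assoc]

end Mobius

theorem siegel_identity_general {n1 n2 : Type*}
    [Fintype n1] [DecidableEq n1] [Fintype n2] [DecidableEq n2]
    (S11 : Matrix (n1 ⊕ n1) (n1 ⊕ n1) ℂ) (S12 : Matrix (n1 ⊕ n1) (n2 ⊕ n2) ℂ)
    (S21 : Matrix (n2 ⊕ n2) (n1 ⊕ n1) ℂ) (S22 : Matrix (n2 ⊕ n2) (n2 ⊕ n2) ℂ)
    (h1 : flatB S11 * S11 + flatB S21 * S21 = 1)
    (h2 : flatB S11 * S12 + flatB S21 * S22 = 0)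
    (h3 : flatB S12 * S11 + flatB S22 * S21 = 0)
    (h4 : flatB S12 * S12 + flatB S22 * S22 = 1)
    (X Y : Matrix (n2 ⊕ n2) (n2 ⊕ n2) ℂ)
    (hX : IsUnit (1 - S22 * X)) (hY : IsUnit (1 - S22 * Y)) :
    flatB (S11 + S12 * X * (1 - S22 * X)⁻¹ * S21) *
        (S11 + S12 * Y * (1 - S22 * Y)⁻¹ * S21) =
      1 - flatB S21 * (1 - flatB X * flatB S22)⁻¹ * (1 - flatB X * Y) *
        (1 - S22 * Y)⁻¹ * S21 := by
  have hflat : flatB (1 - S22 * X) = 1 - flatB X * flatB S22 := by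
    rw [flatB_sub, flatB_one, flatB_mul]
  have hU : IsUnit (1 - flatB X * flatB S22) := hflat ▸ hX.flatB
  rw [← mul_mobius_of_leftInverse h1 h2 h3 h4 hU hY]
  simp only [flatB_add, flatB_mul, flatB_inv, hflat, Matrix.mul_assoc]

theorem siegel_identity {n1 n2 : Type*}
    [Fintype n1] [DecidableEq n1] [Fintype n2] [DecidableEq n2]
    (S11 : Matrix (n1 ⊕ n1) (n1 ⊕ n1) ℂ) (S12 : Matrix (n1 ⊕ n1) (n2 ⊕ n2) ℂ)
    (S21 : Matrix (n2 ⊕ n2) (n1 ⊕ n1) ℂ) (S22 : Matrix (n2 ⊕ n2) (n2 ⊕ n2) ℂ)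
    (h1 : flatB S11 * S11 + flatB S21 * S21 = 1)
    (h2 : flatB S11 * S12 + flatB S21 * S22 = 0)
    (h3 : flatB S12 * S11 + flatB S22 * S21 = 0)
    (h4 : flatB S12 * S12 + flatB S22 * S22 = 1)
    (h5 : S11 * flatB S11 + S12 * flatB S12 = 1)
    (h6 : S11 * flatB S21 + S12 * flatB S22 = 0)
    (h7 : S21 * flatB S11 + S22 * flatB S12 = 0)
    (h8 : S21 * flatB S21 + S22 * flatB S22 = 1)
    (X Y : Matrix (n2 ⊕ n2) (n2 ⊕ n2) ℂ)
    (hX : IsUnit (1 - S22 * X)) (hY : IsUnit (1 - S22 * Y)) :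
    flatB (S11 + S12 * X * (1 - S22 * X)⁻¹ * S21) *
        (S11 + S12 * Y * (1 - S22 * Y)⁻¹ * S21) =
      1 - flatB S21 * (1 - flatB X * flatB S22)⁻¹ * (1 - flatB X * Y) *
        (1 - S22 * Y)⁻¹ * S21 :=
  siegel_identity_general S11 S12 S21 S22 h1 h2 h3 h4 X Y hX hY
end
end
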